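/- arXiv:2310.08972 — 2 statements merged into one kernel-verified Lean document; each statement's English description precedes it below -/
import Mathlib

section
/- The reduced plane curve C' : x(x + y)(xy − z²) = 0 in P² is a nearly free curve with exponents (2,2,2), i.e. D₀(f') is minimally generated by three homogeneous syzygies, each of degree 2. -/
open MvPolynomial Module

noncomputable section

abbrev S3 := MvPolynomial (Fin 3) ℂ
abbrev R2 := MvPolynomial (Fin 2) ℂ
abbrev PP2 := Projectivization ℂ (Fin 3 → ℂ)

/-- The graded `S`-module of Jacobian syzygies of `f`:
`D₀(f) = {(a,b,c) ∈ S³ : a f_x + b f_y + c f_z = 0}`. -/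
def D0 (f : S3) : Submodule S3 (Fin 3 → S3) where
  carrier := {a | ∑ i : Fin 3, a i * pderiv i f = 0}
  add_mem' := by
    intro a b ha hb
    simp only [Set.mem_setOf_eq, Pi.add_apply, add_mul, Finset.sum_add_distrib] at *
    rw [ha, hb, add_zero]
  zero_mem' := by simp
  smul_mem' := by
    intro c a ha
    simp only [Set.mem_setOf_eq, Pi.smul_apply, smul_eq_mul, mul_assoc, ← Finset.mul_sum] at *
    rw [ha, mul_zero]

/-- `D0 f` admits a minimal system of homogeneous generators whose (sorted) list of
degrees, i.e. the exponents of the curve `f = 0`, is `ds`. -/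
def HasExponents (f : S3) (ds : List ℕ) : Prop :=
  ds.Pairwise (· ≤ ·) ∧
  ∃ r : Fin ds.length → (Fin 3 → S3),
    (∀ j, r j ∈ D0 f) ∧
    (∀ j i, (r j i).IsHomogeneous (ds.get j)) ∧
    Submodule.span S3 (Set.range r) = D0 f ∧
    (∀ (n : ℕ) (r' : Fin n → (Fin 3 → S3)),
       Submodule.span S3 (Set.range r') = D0 f → ds.length ≤ n)

/-- A reduced plane curve is free when `D0 f` has a minimal system of two
homogeneous generators. -/
def IsFreeCurve (f : S3) : Prop := ∃ d₁ d₂ : ℕ, HasExponents f [d₁, d₂]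

/-- The curve `f = 0` is plus-one generated with exponents `(a, b, c)`:
it is a 3-syzygy curve with `d₁ + d₂ = d`. -/
def PlusOneGenExps (f : S3) (a b c : ℕ) : Prop :=
  HasExponents f [a, b, c] ∧ a + b = f.totalDegree

/-- The curve `f = 0` is plus-one generated. -/
def IsPlusOneGen (f : S3) : Prop := ∃ a b c : ℕ, PlusOneGenExps f a b c

/-- A nearly free curve is a plus-one generated curve with `d₂ = d₃`. -/
def IsNearlyFree (f : S3) : Prop := ∃ a b : ℕ, PlusOneGenExps f a b b

/-- The minimal degree of a nonzero Jacobian syzygy of `f`, i.e. the smallest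
exponent `d₁` of the curve `f = 0`. -/
def mdr (f : S3) : ℕ :=
  sInf {k | ∃ a ∈ D0 f, a ≠ 0 ∧ ∀ i, (a i : S3).IsHomogeneous k}

/-- The set of points of the projective plane curve defined by a homogeneous `f`. -/
def projZeros (f : S3) : Set PP2 := {q | eval q.rep f = 0}

/-- The number of intersection points `r = |C ∩ D|` of the curves `f = 0`, `g = 0`. -/
def interCount (f g : S3) : ℕ := (projZeros f ∩ projZeros g).ncard

/-- The maximal ideal of polynomials vanishing at the point `p` of the affine plane. -/
def ptIdeal (p : Fin 2 → ℂ) : Ideal R2 := RingHom.ker (aeval p : R2 →ₐ[ℂ] ℂ)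

instance (p : Fin 2 → ℂ) : (ptIdeal p).IsPrime := RingHom.ker_isPrime _

/-- The local ring of the affine plane at the point `p`. -/
abbrev LocalAt (p : Fin 2 → ℂ) := Localization.AtPrime (ptIdeal p)

/-- The local Milnor number of the affine curve `g = 0` at the point `p`. -/
def localMu (g : R2) (p : Fin 2 → ℂ) : ℕ :=
  finrank ℂ (LocalAt p ⧸ Ideal.span
    {algebraMap R2 (LocalAt p) (pderiv 0 g), algebraMap R2 (LocalAt p) (pderiv 1 g)})

/-- The local Tjurina number of the affine curve `g = 0` at the point `p`. -/
def localTau (g : R2) (p : Fin 2 → ℂ) : ℕ :=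
  finrank ℂ (LocalAt p ⧸ Ideal.span
    {algebraMap R2 (LocalAt p) g,
     algebraMap R2 (LocalAt p) (pderiv 0 g), algebraMap R2 (LocalAt p) (pderiv 1 g)})

/-- The substitution realizing the `i`-th standard affine chart of `P²`. -/
def chartVars (i : Fin 3) : Fin 3 → R2 :=
  ![![1, X 0, X 1], ![X 0, 1, X 1], ![X 0, X 1, 1]] i

/-- Dehomogenization of `f` in the `i`-th standard affine chart. -/
def dehom (i : Fin 3) (f : S3) : R2 := aeval (chartVars i) f

/-- The affine coordinates, in the `i`-th standard chart, of the point with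
homogeneous coordinates `v`. -/
def affPt (i : Fin 3) (v : Fin 3 → ℂ) : Fin 2 → ℂ :=
  ![![v 1 / v 0, v 2 / v 0], ![v 0 / v 1, v 2 / v 1], ![v 0 / v 2, v 1 / v 2]] i

open Classical in
/-- A standard affine chart containing the projective point `q`. -/
def chartOf (q : PP2) : Fin 3 :=
  if q.rep 2 ≠ 0 then 2 else if q.rep 1 ≠ 0 then 1 else 0

/-- The Milnor number `μ(C, q)` of the plane curve `C : f = 0` at the point `q`. -/
def muP (f : S3) (q : PP2) : ℕ := localMu (dehom (chartOf q) f) (affPt (chartOf q) q.rep)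

/-- The Tjurina number `τ(C, q)` of the plane curve `C : f = 0` at the point `q`. -/
def tauP (f : S3) (q : PP2) : ℕ := localTau (dehom (chartOf q) f) (affPt (chartOf q) q.rep)

/-- `ε(C, q) = μ(C, q) − τ(C, q)`. -/
def epsP (f : S3) (q : PP2) : ℤ := (muP f q : ℤ) - tauP f q

/-- `ε(C, D) = ∑_{q ∈ C ∩ D} (ε(C ∪ D, q) − ε(C, q))`, for `C : f = 0`, `D : g = 0`. -/
def epsPair (f g : S3) : ℤ :=
  ∑ᶠ q ∈ projZeros f ∩ projZeros g, (epsP (g * f) q - epsP f q)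

/-- The set of singular points of the plane curve `f = 0`. -/
def singSet (f : S3) : Set PP2 := {q | ∀ i, eval q.rep (pderiv i f) = 0}

/-- The total Tjurina number of the plane curve `f = 0`. -/
def totalTau (f : S3) : ℕ := ∑ᶠ q ∈ singSet f, tauP f q

/-- Triples of polynomials all homogeneous of degree `k`, as a `ℂ`-subspace. -/
def homogTriples (k : ℕ) : Submodule ℂ (Fin 3 → S3) where
  carrier := {a | ∀ i, (a i).IsHomogeneous k}
  add_mem' := fun ha hb i => (ha i).add (hb i)
  zero_mem' := fun i => isHomogeneous_zero _ _ _
  smul_mem' := by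
    intro c a ha i
    rw [Pi.smul_apply, MvPolynomial.smul_eq_C_mul]
    simpa using (isHomogeneous_C _ c).mul (ha i)

/-- The degree `k` homogeneous part of `D0 f`, as a `ℂ`-vector space. -/
def D0h (f : S3) (k : ℕ) : Submodule ℂ (Fin 3 → S3) :=
  (D0 f).restrictScalars ℂ ⊓ homogTriples k

/-- `dim_ℂ D0(f)_k`. -/
def hilbD0 (f : S3) (k : ℕ) : ℕ := finrank ℂ (D0h f k)

/-- `dim_ℂ D0(f)_k` for an integer `k` (zero in negative degrees). -/
def hilbD0Z (f : S3) (k : ℤ) : ℕ := if 0 ≤ k then hilbD0 f k.toNat else 0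

/-- The Jacobian ideal of `f`. -/
def Jf (f : S3) : Ideal S3 := Ideal.span {pderiv 0 f, pderiv 1 f, pderiv 2 f}

/-- The irrelevant maximal ideal of `S`. -/
def mIrr : Ideal S3 := Ideal.span {X 0, X 1, X 2}

/-- The saturation `I_f` of the Jacobian ideal with respect to `(x,y,z)`. -/
def Isat (f : S3) : Ideal S3 := ⨆ n : ℕ, (Jf f).colon ((mIrr ^ n : Ideal S3) : Set S3)

/-- Homogeneous polynomials of degree `k`, as a `ℂ`-subspace of `S`. -/
def homogPoly (k : ℕ) : Submodule ℂ S3 where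
  carrier := {g | g.IsHomogeneous k}
  add_mem' := fun ha hb => ha.add hb
  zero_mem' := isHomogeneous_zero _ _ _
  smul_mem' := by
    intro c g hg
    rw [MvPolynomial.smul_eq_C_mul]
    simpa using (isHomogeneous_C _ c).mul hg

/-- `n(f)_k = dim_ℂ N(f)_k`, where `N(f) = I_f / J_f` is the Jacobian module. -/
def nfDim (f : S3) (k : ℕ) : ℕ :=
  finrank ℂ ((Submodule.restrictScalars ℂ (Isat f) ⊓ homogPoly k : Submodule ℂ S3))
    - finrank ℂ ((Submodule.restrictScalars ℂ (Jf f) ⊓ homogPoly k : Submodule ℂ S3))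

/-- `n(f)_k` for an integer `k` (zero in negative degrees). -/
def nfDimZ (f : S3) (k : ℤ) : ℕ := if 0 ≤ k then nfDim f k.toNat else 0

/-- A homogeneous `f` defines a smooth projective plane curve. -/
def IsSmoothCurve (f : S3) : Prop :=
  ∀ v : Fin 3 → ℂ, v ≠ 0 → ¬ (∀ i, eval v (pderiv i f) = 0)

/-- The homogenization `f(x,y,z) = z^d g(x/z, y/z)` of a degree `d` polynomial `g`
in two variables. -/
def homogz (d : ℕ) (g : R2) : S3 :=
  ∑ m ∈ g.support,
    monomial (Finsupp.equivFunOnFinite.symm ![m 0, m 1, d - (m 0 + m 1)]) (coeff m g)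

/-- A function on a (quasi-affine) subset `A` of `ℂ³` is regular if it is locally
a ratio of polynomials with non-vanishing denominator. -/
def IsRegularOn (A : Set (Fin 3 → ℂ)) (h : (Fin 3 → ℂ) → ℂ) : Prop :=
  ∀ v ∈ A, ∃ P Q : S3, eval v Q ≠ 0 ∧
    ∀ w ∈ A, eval w Q ≠ 0 → h w = eval w P / eval w Q

/-- `A` and `B` are isomorphic as complex algebraic varieties. -/
def IsIsoVar (A B : Set (Fin 3 → ℂ)) : Prop :=
  ∃ F G : (Fin 3 → ℂ) → (Fin 3 → ℂ),
    Set.MapsTo F A B ∧ Set.MapsTo G B A ∧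
    (∀ i, IsRegularOn A (fun v => F v i)) ∧
    (∀ i, IsRegularOn B (fun w => G w i)) ∧
    (∀ v ∈ A, G (F v) = v) ∧ (∀ w ∈ B, F (G w) = w)

/-!
The three quadratic syzygies `conicSyzygy` are checked directly. They generate `D₀(f)`: since
`f_z ≠ 0`, a syzygy `(a, b, c)` is determined by `(a, b)`, and restricting the syzygy equation to
the lines `x = 0`, `z = 0`, `x + 2y = 0` and `x + y = 0` forces enough divisibilities of `a` and
`b` to write them as combinations of the first two coordinates of the generators. Minimality
holds because the generators all have degree `2` and are `ℂ`-linearly independent.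
-/

open Submodule

section Substitution

variable {R σ : Type*} [CommRing R] [DecidableEq σ]

theorem MvPolynomial.X_sub_dvd_sub_bind₁_update (i : σ) (q p : MvPolynomial σ R) :
    X i - q ∣ p - bind₁ (Function.update X i q) p := by
  let I := Ideal.span {X i - q}
  have hmk : (Ideal.Quotient.mkₐ R I).comp (bind₁ (Function.update X i q)) =
      Ideal.Quotient.mkₐ R I := by
    refine algHom_ext fun j => ?_
    rcases eq_or_ne j i with rfl | hj
    · simp only [AlgHom.comp_apply, bind₁_X_right, Function.update_self,
        Ideal.Quotient.mkₐ_eq_mk]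
      exact Ideal.Quotient.eq.mpr (Ideal.mem_span_singleton.mpr ⟨-1, by ring⟩)
    · simp [Function.update_of_ne hj]
  rw [← Ideal.mem_span_singleton, ← Ideal.Quotient.eq]
  exact (DFunLike.congr_fun hmk p).symm

theorem MvPolynomial.X_sub_dvd_of_bind₁_update_eq_zero {i : σ} {q p : MvPolynomial σ R}
    (h : bind₁ (Function.update X i q) p = 0) : X i - q ∣ p := by
  simpa only [h, sub_zero] using X_sub_dvd_sub_bind₁_update i q p

theorem MvPolynomial.X_dvd_of_bind₁_update_zero_eq_zero {i : σ} {p : MvPolynomial σ R}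
    (h : bind₁ (Function.update X i (0 : MvPolynomial σ R)) p = 0) : X i ∣ p := by
  simpa only [sub_zero] using X_sub_dvd_of_bind₁_update_eq_zero h

end Substitution

section Homogeneous

theorem MvPolynomial.IsHomogeneous.ofNat_mul {σ R : Type*} [CommSemiring R]
    {φ : MvPolynomial σ R} {m : ℕ} (n : ℕ) [n.AtLeastTwo] (hφ : φ.IsHomogeneous m) :
    (OfNat.ofNat n * φ).IsHomogeneous m := by
  simpa only [map_ofNat] using hφ.C_mul (OfNat.ofNat n : R)

attribute [local instance] MvPolynomial.gradedAlgebra in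
theorem MvPolynomial.homogeneousComponent_mul_of_isHomogeneous {σ R : Type*} [CommSemiring R]
    {d : ℕ} {q : MvPolynomial σ R} (hq : q.IsHomogeneous d) (p : MvPolynomial σ R) :
    homogeneousComponent d (p * q) = constantCoeff p • q := by
  have := DirectSum.coe_decompose_mul_of_right_mem_of_le
    (𝒜 := homogeneousSubmodule σ R) (a := p) hq le_rfl
  rw [← decomposition.decompose'_apply, DirectSum.Decomposition.decompose'_eq, this,
    Nat.sub_self, ← DirectSum.Decomposition.decompose'_eq, decomposition.decompose'_apply,
    homogeneousComponent_zero, smul_eq_C_mul, constantCoeff_eq]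

/- The degree-`d` parts of the members of a generating family span (over `K`) the degree-`d`
part of the module, as no member has components of degree `< d`. -/
theorem card_le_of_span_eq_span_of_isHomogeneous {σ ι κ ν K : Type*} [CommRing K]
    [Nontrivial K] [Fintype κ] [Fintype ν] {d : ℕ} {g : κ → ι → MvPolynomial σ K}
    (hg : ∀ k i, (g k i).IsHomogeneous d) (hli : LinearIndependent K g)
    {r : ν → ι → MvPolynomial σ K}
    (hspan : span (MvPolynomial σ K) (Set.range r) = span (MvPolynomial σ K) (Set.range g)) :
    Fintype.card κ ≤ Fintype.card ν := by
  classical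
  let π : (ι → MvPolynomial σ K) →ₗ[K] ι → MvPolynomial σ K :=
    LinearMap.pi fun i => homogeneousComponent d ∘ₗ LinearMap.proj i
  have hπg (k : κ) : π (g k) = g k := funext fun i => homogeneousComponent_eq_self (hg k i)
  have hπ_smul : ∀ v ∈ span (MvPolynomial σ K) (Set.range g), ∀ p : MvPolynomial σ K,
      π (p • v) = constantCoeff p • π v := by
    intro v hv
    induction hv using span_induction with
    | mem v hv =>
      obtain ⟨k, rfl⟩ := hv
      intro p
      rw [hπg]
      exact funext fun i => homogeneousComponent_mul_of_isHomogeneous (hg k i) p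
    | zero => simp
    | add v w _ _ hv hw => intro p; simp [smul_add, hv, hw]
    | smul a v _ hv => intro p; rw [smul_smul, hv, hv, smul_smul, map_mul]
  have hsub : Set.range g ≤ span K (Set.range (π ∘ r)) := by
    rintro _ ⟨k, rfl⟩
    have hk : g k ∈ span (MvPolynomial σ K) (Set.range r) := hspan ▸ subset_span ⟨k, rfl⟩
    obtain ⟨p, hp⟩ := mem_span_range_iff_exists_fun _ |>.mp hk
    rw [← hπg, ← hp, map_sum]
    refine sum_mem fun j _ => ?_
    rw [hπ_smul _ (hspan ▸ subset_span ⟨j, rfl⟩)]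
    exact smul_mem _ _ (subset_span ⟨j, rfl⟩)
  have := linearIndependent_le_span' g hli _ hsub
  rw [Cardinal.mk_fintype, Nat.cast_le] at this
  exact this.trans (Fintype.card_range_le _)

end Homogeneous

theorem mem_D0_iff {f : S3} {s : Fin 3 → S3} :
    s ∈ D0 f ↔ s 0 * pderiv 0 f + s 1 * pderiv 1 f + s 2 * pderiv 2 f = 0 := by
  change ∑ i, s i * pderiv i f = 0 ↔ _
  rw [Fin.sum_univ_three]

theorem eq_of_mem_D0 {f : S3} (hf : pderiv 2 f ≠ 0) {s t : Fin 3 → S3} (hs : s ∈ D0 f)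
    (ht : t ∈ D0 f) (h0 : s 0 = t 0) (h1 : s 1 = t 1) : s = t := by
  have hst := mem_D0_iff.mp (sub_mem hs ht)
  simp only [Pi.sub_apply, h0, h1, sub_self, zero_mul, zero_add] at hst
  have h2 : s 2 = t 2 := sub_eq_zero.mp ((mul_eq_zero.mp hst).resolve_right hf)
  funext i
  fin_cases i <;> assumption

section ConicTwoLines

def conicTwoLines : S3 := X 0 * (X 0 + X 1) * (X 0 * X 1 - X 2 ^ 2)

theorem totalDegree_conicTwoLines : conicTwoLines.totalDegree = 4 := by
  have hX (i : Fin 3) : (X i : S3).IsHomogeneous 1 := isHomogeneous_X ℂ i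
  refine IsHomogeneous.totalDegree
    (((hX 0).mul ((hX 0).add (hX 1))).mul (((hX 0).mul (hX 1)).sub (isHomogeneous_X_pow 2 2)))
    (ne_zero_of_map (f := eval ![1, 1, 0]) (by simp [conicTwoLines, Matrix.cons_val]))

theorem pderiv_zero_conicTwoLines : pderiv 0 conicTwoLines =
    3 * X 0 ^ 2 * X 1 + 2 * X 0 * X 1 ^ 2 - 2 * X 0 * X 2 ^ 2 - X 1 * X 2 ^ 2 := by
  simp only [conicTwoLines, Derivation.leibniz, Derivation.leibniz_pow, map_add, map_sub,
    pderiv_X, Pi.single_eq_same, Pi.single_eq_of_ne, ne_eq, Fin.reduceEq, not_false_eq_true,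
    smul_eq_mul, nsmul_eq_mul]
  ring

theorem pderiv_one_conicTwoLines :
    pderiv 1 conicTwoLines = X 0 * (X 0 ^ 2 + 2 * X 0 * X 1 - X 2 ^ 2) := by
  simp only [conicTwoLines, Derivation.leibniz, Derivation.leibniz_pow, map_add, map_sub,
    pderiv_X, Pi.single_eq_same, Pi.single_eq_of_ne, ne_eq, Fin.reduceEq, not_false_eq_true,
    smul_eq_mul, nsmul_eq_mul]
  ring

theorem pderiv_two_conicTwoLines :
    pderiv 2 conicTwoLines = -(2 * X 0 * X 2 * (X 0 + X 1)) := by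
  simp only [conicTwoLines, Derivation.leibniz, Derivation.leibniz_pow, map_add, map_sub,
    pderiv_X, Pi.single_eq_same, Pi.single_eq_of_ne, ne_eq, Fin.reduceEq, not_false_eq_true,
    smul_eq_mul, nsmul_eq_mul]
  ring

theorem pderiv_two_conicTwoLines_ne_zero : pderiv 2 conicTwoLines ≠ 0 := by
  rw [pderiv_two_conicTwoLines]
  exact ne_zero_of_map (f := eval 1) (by norm_num)

theorem conicTwoLines_syzygy_equation {s : Fin 3 → S3} (hs : s ∈ D0 conicTwoLines) :
    s 0 * (3 * X 0 ^ 2 * X 1 + 2 * X 0 * X 1 ^ 2 - 2 * X 0 * X 2 ^ 2 - X 1 * X 2 ^ 2) +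
      s 1 * (X 0 * (X 0 ^ 2 + 2 * X 0 * X 1 - X 2 ^ 2)) +
      s 2 * -(2 * X 0 * X 2 * (X 0 + X 1)) = 0 := by
  rw [← pderiv_zero_conicTwoLines, ← pderiv_one_conicTwoLines, ← pderiv_two_conicTwoLines]
  exact mem_D0_iff.mp hs

def conicSyzygy : Fin 3 → Fin 3 → S3 :=
  ![![X 0 * (X 0 + 2 * X 1), -(X 1 * (3 * X 0 + 2 * X 1)), -(X 0 * X 2)],
    ![2 * X 0 * X 2, -(2 * X 0 * X 2), -X 0 ^ 2 + 2 * X 0 * X 1 - X 2 ^ 2],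
    ![0, 2 * X 2 * (X 0 + X 1), X 0 ^ 2 + 2 * X 0 * X 1 - X 2 ^ 2]]

theorem conicSyzygy_mem_D0 (k : Fin 3) : conicSyzygy k ∈ D0 conicTwoLines := by
  rw [mem_D0_iff, pderiv_zero_conicTwoLines, pderiv_one_conicTwoLines,
    pderiv_two_conicTwoLines]
  fin_cases k <;> simp only [conicSyzygy, Fin.reduceFinMk, Matrix.cons_val] <;> ring

theorem span_conicSyzygy_le_D0 : span S3 (Set.range conicSyzygy) ≤ D0 conicTwoLines :=
  span_le.mpr <| Set.range_subset_iff.mpr conicSyzygy_mem_D0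

theorem isHomogeneous_conicSyzygy (k i : Fin 3) : (conicSyzygy k i).IsHomogeneous 2 := by
  have hX (i : Fin 3) : (X i : S3).IsHomogeneous 1 := isHomogeneous_X ℂ i
  have hX0X1 : (2 * X 0 * X 1 : S3).IsHomogeneous 2 := ((hX 0).ofNat_mul 2).mul (hX 1)
  have hX0X2 : (2 * X 0 * X 2 : S3).IsHomogeneous 2 := ((hX 0).ofNat_mul 2).mul (hX 2)
  fin_cases k <;> fin_cases i
  exacts [(hX 0).mul ((hX 0).add ((hX 1).ofNat_mul 2)),
    ((hX 1).mul (((hX 0).ofNat_mul 3).add ((hX 1).ofNat_mul 2))).neg,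
    ((hX 0).mul (hX 2)).neg, hX0X2, hX0X2.neg,
    ((isHomogeneous_X_pow 0 2).neg.add hX0X1).sub (isHomogeneous_X_pow 2 2),
    isHomogeneous_zero _ _ _, ((hX 2).ofNat_mul 2).mul ((hX 0).add (hX 1)),
    ((isHomogeneous_X_pow 0 2).add hX0X1).sub (isHomogeneous_X_pow 2 2)]

theorem linearIndependent_conicSyzygy : LinearIndependent ℂ conicSyzygy := by
  rw [Fintype.linearIndependent_iff]
  intro g hg
  have e0 := congrArg (eval ![1, 0, 0]) (congrFun hg 0)
  have e1 := congrArg (eval ![1, 0, 1]) (congrFun hg 0)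
  have e2 := congrArg (eval ![1, 0, 1]) (congrFun hg 1)
  simp only [Fin.sum_univ_three, conicSyzygy, Pi.add_apply, Pi.smul_apply, Pi.zero_apply,
    Matrix.cons_val, smul_eval, map_add, map_mul, map_neg, map_zero, eval_X, eval_ofNat] at e0 e1 e2
  norm_num at e0 e1 e2
  have e1' : g 1 = 0 := by linear_combination (e1 - e0) / 2
  have e2' : g 2 = 0 := by linear_combination (e2 + e1 - e0) / 2
  intro i
  fin_cases i <;> assumption

/- Restricting the syzygy equation to `x = 0` gives `x ∣ a`, then to `z = 0` and to the line
`x + 2y = 0` on `z = 0` pins down `a` and `b` modulo `z`. -/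
theorem exists_decomposition_of_mem_D0 {s : Fin 3 → S3} (hs : s ∈ D0 conicTwoLines) :
    ∃ u a₁ b₁ : S3, s 0 = X 0 * ((X 0 + 2 * X 1) * u + X 2 * a₁) ∧
      s 1 = -(X 1 * (3 * X 0 + 2 * X 1)) * u + X 2 * b₁ := by
  have h := conicTwoLines_syzygy_equation hs
  have hx : bind₁ (Function.update X 0 (0 : S3)) (s 0) = 0 := by
    simpa [map_ofNat] using congrArg (bind₁ (Function.update X 0 (0 : S3))) h
  obtain ⟨a', ha'⟩ := X_dvd_of_bind₁_update_zero_eq_zero hx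
  set σz := bind₁ (Function.update X 2 (0 : S3))
  have hz : σz a' * (X 1 * (3 * X 0 + 2 * X 1)) + σz (s 1) * (X 0 + 2 * X 1) = 0 := by
    have := congrArg σz h
    simp only [σz, ha', map_add, map_sub, map_mul, map_neg, map_pow, map_ofNat, map_zero,
      bind₁_X_right, Function.update_self, Function.update_of_ne, ne_eq, Fin.reduceEq,
      not_false_eq_true] at this
    refine (mul_eq_zero.mp (?_ : (X 0 : S3) ^ 2 * _ = 0)).resolve_left
      (pow_ne_zero 2 (X_ne_zero 0))
    linear_combination this
  have hzx : bind₁ (Function.update X 0 (-(2 * X 1) : S3)) (σz a') = 0 := by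
    have := congrArg (bind₁ (Function.update X 0 (-(2 * X 1) : S3))) hz
    simp only [map_add, map_mul, map_ofNat, map_zero, bind₁_X_right, Function.update_self,
      Function.update_of_ne, ne_eq, Fin.reduceEq, not_false_eq_true] at this
    refine (mul_eq_zero.mp (?_ : _ * (4 * X 1 ^ 2 : S3) = 0)).resolve_right
      (ne_zero_of_map (f := eval 1) (by norm_num))
    linear_combination -this
  obtain ⟨u, hu⟩ : X 0 + 2 * X 1 ∣ σz a' := by
    simpa using X_sub_dvd_of_bind₁_update_eq_zero hzx
  have hb : σz (s 1) = -(X 1 * (3 * X 0 + 2 * X 1)) * u := by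
    have : (X 0 + 2 * X 1) * (σz (s 1) + X 1 * (3 * X 0 + 2 * X 1) * u) = 0 := by
      linear_combination hz - X 1 * (3 * X 0 + 2 * X 1) * hu
    linear_combination
      (mul_eq_zero.mp this).resolve_left (ne_zero_of_map (f := eval 1) (by norm_num))
  obtain ⟨a₁, ha₁⟩ := X_sub_dvd_sub_bind₁_update 2 (0 : S3) a'
  obtain ⟨b₁, hb₁⟩ := X_sub_dvd_sub_bind₁_update 2 (0 : S3) (s 1)
  refine ⟨u, a₁, b₁, ?_, ?_⟩
  · linear_combination ha' + X 0 * ha₁ + X 0 * hu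
  · linear_combination hb₁ + hb

/- On the line `x + y = 0` both `f_x` and `f_y` restrict to `-x(x² + z²)`, so `x + y ∣ a + b`;
this supplies the coefficient of the third generator. -/
theorem mem_span_conicSyzygy_of_mem_D0 {s : Fin 3 → S3} (hs : s ∈ D0 conicTwoLines) :
    s ∈ span S3 (Set.range conicSyzygy) := by
  obtain ⟨u, a₁, b₁, ha, hb⟩ := exists_decomposition_of_mem_D0 hs
  set σ := bind₁ (Function.update X 1 (-X 0 : S3))
  have hsum : σ (s 0 + s 1) = 0 := by
    have := congrArg σ (conicTwoLines_syzygy_equation hs)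
    simp only [σ, map_add, map_sub, map_mul, map_neg, map_pow, map_ofNat, map_zero,
      bind₁_X_right, Function.update_self, Function.update_of_ne, ne_eq, Fin.reduceEq,
      not_false_eq_true] at this
    rw [map_add]
    refine (mul_eq_zero.mp (?_ : _ * ((X 0 : S3) * (X 0 ^ 2 + X 2 ^ 2)) = 0)).resolve_right
      (ne_zero_of_map (f := eval 1) (by norm_num))
    linear_combination -this
  have hsum' : s 0 + s 1 = (X 0 + X 1) * ((X 0 - 2 * X 1) * u) + X 2 * (X 0 * a₁ + b₁) := by
    linear_combination ha + hb
  obtain ⟨w, hw⟩ : X 0 + X 1 ∣ X 0 * a₁ + b₁ := by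
    have : σ (X 0 * a₁ + b₁) = 0 := by
      rw [hsum'] at hsum
      simpa [σ] using hsum
    simpa [add_comm] using X_sub_dvd_of_bind₁_update_eq_zero this
  have hhalf : (C 2⁻¹ : S3) * 2 = 1 := by
    rw [← map_ofNat C 2, ← map_mul, inv_mul_cancel₀ two_ne_zero, map_one]
  let t := u • conicSyzygy 0 + (C 2⁻¹ * a₁) • conicSyzygy 1 +
    (C 2⁻¹ * w) • conicSyzygy 2
  have ht : t ∈ span S3 (Set.range conicSyzygy) := by
    refine add_mem (add_mem ?_ ?_) ?_ <;> exact smul_mem _ _ (subset_span ⟨_, rfl⟩)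
  convert ht using 1
  refine eq_of_mem_D0 pderiv_two_conicTwoLines_ne_zero hs (span_conicSyzygy_le_D0 ht) ?_ ?_
  · simp only [t, conicSyzygy, Pi.add_apply, Pi.smul_apply, smul_eq_mul, Matrix.cons_val]
    linear_combination ha - X 0 * X 2 * a₁ * hhalf
  · simp only [t, conicSyzygy, Pi.add_apply, Pi.smul_apply, smul_eq_mul, Matrix.cons_val]
    linear_combination hb + X 2 * hw + (X 0 * X 2 * a₁ - X 2 * (X 0 + X 1) * w) * hhalf

theorem span_conicSyzygy : span S3 (Set.range conicSyzygy) = D0 conicTwoLines :=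
  span_conicSyzygy_le_D0.antisymm fun _ => mem_span_conicSyzygy_of_mem_D0

end ConicTwoLines

/-- **Example 4.1 (iii).** The curve `x(x + y)(xy − z²) = 0` is nearly free with
exponents `(2,2,2)`. -/
theorem conic_two_lines_nearly_free :
    PlusOneGenExps (X 0 * (X 0 + X 1) * (X 0 * X 1 - X 2 ^ 2)) 2 2 2 := by
  refine ⟨⟨by decide, conicSyzygy, conicSyzygy_mem_D0, fun j => ?_, span_conicSyzygy,
    fun n r hr => ?_⟩, totalDegree_conicTwoLines.symm⟩
  · fin_cases j <;> exact isHomogeneous_conicSyzygy _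
  · simpa using card_le_of_span_eq_span_of_isHomogeneous isHomogeneous_conicSyzygy
      linearIndependent_conicSyzygy (hr.trans span_conicSyzygy.symm)
end
end

section
/- Let g ∈ ℂ[x,y] be a reduced polynomial of degree d such that g ∘ φ = u^p − v^q for some polynomial automorphism φ of ℂ² and relatively prime integers p, q ≥ 1. Let f(x,y,z) = z^d g(x/z, y/z) be the homogenization of g and set f' = z·f. Then the affine surface F' : f'(x,y,z) = 1 in ℂ³ (the Milnor fiber of f') is isomorphic, as a complex algebraic variety, to the surface Z₀ = {(u,v,w) ∈ ℂ³ : u^p − v^q + w^{d+1} = 0, w ≠ 0}. -/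
open MvPolynomial Module

noncomputable section

/-! The substitution `(x, y, z) ↦ (x/z, y/z, z)` turns `z·f = 1` into `z^(d+1) g(x/z, y/z) = 1`.
Transporting `(x/z, y/z)` by the polynomial automorphism `φ⁻¹` makes `g` into `u^p − v^q`, and
replacing `z` by `w = ζ/z` with `ζ^(d+1) = −1` turns `z^(d+1) (u^p − v^q) = 1` into
`u^p − v^q + w^(d+1) = 0`. Each step is inverted by a map that is polynomial in the coordinates
and `1/z` (resp. `1/w`). -/

namespace MvPolynomial

variable {σ τ R : Type*} [CommSemiring R]

theorem eval_comap (f : MvPolynomial σ R →ₐ[R] MvPolynomial τ R) (x : τ → R)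
    (p : MvPolynomial σ R) : eval (comap f x) p = eval x (f p) := by
  conv_rhs => rw [aeval_unique f]
  exact (aeval_bind₁ x (f ∘ X) p).symm

end MvPolynomial

lemma affPt_two_eq_smul_init (v : Fin 3 → ℂ) : affPt 2 v = (v 2)⁻¹ • Fin.init v := by
  ext j
  fin_cases j <;> simp [affPt, Fin.init, div_eq_inv_mul]

lemma affPt_two_snoc_smul (s : Fin 2 → ℂ) {t : ℂ} (ht : t ≠ 0) :
    affPt 2 (Fin.snoc (α := fun _ => ℂ) (t • s) t) = s := by
  rw [affPt_two_eq_smul_init, Fin.init_snoc]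
  exact inv_smul_smul₀ ht s

lemma snoc_smul_affPt_two {v : Fin 3 → ℂ} (hv : v 2 ≠ 0) :
    Fin.snoc (α := fun _ => ℂ) (v 2 • affPt 2 v) (v 2) = v := by
  rw [affPt_two_eq_smul_init, smul_inv_smul₀ hv]
  exact Fin.snoc_init_self v

lemma eval_homogz {N : ℕ} {h : R2} (hN : h.totalDegree ≤ N) {v : Fin 3 → ℂ} (hv : v 2 ≠ 0) :
    eval v (homogz N h) = v 2 ^ N * eval (affPt 2 v) h := by
  rw [homogz, map_sum, eval_eq', Finset.mul_sum]
  refine Finset.sum_congr rfl fun m hm => ?_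
  have hle : m 0 + m 1 ≤ N := by
    refine le_trans ?_ ((le_totalDegree hm).trans hN)
    rw [Finsupp.sum_fintype _ _ fun _ => rfl, Fin.sum_univ_two]
  obtain ⟨k, hk⟩ := Nat.exists_eq_add_of_le hle
  rw [eval_monomial, Finsupp.prod_fintype _ _ fun _ => pow_zero _, hk, Nat.add_sub_cancel_left]
  simp only [Finsupp.coe_equivFunOnFinite_symm, Fin.prod_univ_three, Fin.prod_univ_two, affPt,
    Matrix.cons_val_zero, Matrix.cons_val_one, Matrix.cons_val_two, Matrix.head_cons,
    Matrix.tail_cons, div_pow, pow_add]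
  field_simp

lemma eval_X_two_mul_homogz_eq_one_iff {N : ℕ} {h : R2} (hN : h.totalDegree ≤ N)
    {v : Fin 3 → ℂ} :
    eval v (X 2 * homogz N h) = 1 ↔ v 2 ≠ 0 ∧ v 2 ^ (N + 1) * eval (affPt 2 v) h = 1 := by
  rw [map_mul, eval_X]
  constructor
  · intro hv
    have hv2 : v 2 ≠ 0 := left_ne_zero_of_mul_eq_one hv
    rw [eval_homogz hN hv2, ← mul_assoc, ← pow_succ'] at hv
    exact ⟨hv2, hv⟩
  · rintro ⟨hv2, hv⟩
    rwa [eval_homogz hN hv2, ← mul_assoc, ← pow_succ']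

section Regular

variable {A : Set (Fin 3 → ℂ)}

lemma IsRegularOn.congr {f f' : (Fin 3 → ℂ) → ℂ} (hf : IsRegularOn A f) (h : Set.EqOn f f' A) :
    IsRegularOn A f' := by
  intro v hv
  obtain ⟨P, Q, hQv, hPQ⟩ := hf v hv
  exact ⟨P, Q, hQv, fun w hw hQw => (h hw).symm.trans (hPQ w hw hQw)⟩

lemma isRegularOn_div (P Q : S3) (hQ : ∀ v ∈ A, eval v Q ≠ 0) :
    IsRegularOn A fun v => eval v P / eval v Q :=
  fun v hv => ⟨P, Q, hQ v hv, fun _ _ _ => rfl⟩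

lemma isRegularOn_eval_affPt_two (h : R2) (hA : ∀ v ∈ A, v 2 ≠ 0) :
    IsRegularOn A fun v => eval (affPt 2 v) h := by
  refine (isRegularOn_div (homogz h.totalDegree h) (X 2 ^ h.totalDegree)
    fun v hv => by simpa using pow_ne_zero _ (hA v hv)).congr fun v hv => ?_
  simp only [eval_homogz le_rfl (hA v hv), map_pow, eval_X]
  field_simp [hA v hv]

lemma isRegularOn_div_two_mul_eval_init (c : ℂ) (h : R2) (hA : ∀ v ∈ A, v 2 ≠ 0) :
    IsRegularOn A fun v => c / v 2 * eval (Fin.init v) h := by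
  refine (isRegularOn_div (C c * rename Fin.castSucc h) (X 2)
    fun v hv => by simpa using hA v hv).congr fun v _ => ?_
  simp only [map_mul, eval_C, eval_rename, eval_X]
  rw [div_mul_eq_mul_div]
  rfl

end Regular

def milnorFiber (d : ℕ) (g : R2) : Set (Fin 3 → ℂ) := {v | eval v (X 2 * homogz d g) = 1}

def z0Surface (p q d : ℕ) : Set (Fin 3 → ℂ) :=
  {w | w 0 ^ p - w 1 ^ q + w 2 ^ (d + 1) = 0 ∧ w 2 ≠ 0}

section MilnorFiber

variable (φ : R2 ≃ₐ[ℂ] R2) (ζ : ℂ)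

def milnorFiberToZ0 (v : Fin 3 → ℂ) : Fin 3 → ℂ :=
  Fin.snoc (α := fun _ => ℂ) ((comapEquiv φ).symm (affPt 2 v)) (ζ / v 2)

def z0ToMilnorFiber (w : Fin 3 → ℂ) : Fin 3 → ℂ :=
  Fin.snoc (α := fun _ => ℂ) ((ζ / w 2) • comapEquiv φ (Fin.init w)) (ζ / w 2)

variable {φ ζ}

lemma eval_comapEquiv_of_map_eq {g : R2} {p q : ℕ} (hφ : φ g = X 0 ^ p - X 1 ^ q)
    (x : Fin 2 → ℂ) : eval (comapEquiv φ x) g = x 0 ^ p - x 1 ^ q := by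
  rw [comapEquiv_coe, eval_comap]
  simp [hφ]

lemma mapsTo_milnorFiberToZ0 {d p q : ℕ} {g : R2} (hdeg : g.totalDegree ≤ d)
    (hφ : φ g = X 0 ^ p - X 1 ^ q) (hζ : ζ ^ (d + 1) = -1) :
    Set.MapsTo (milnorFiberToZ0 φ ζ) (milnorFiber d g) (z0Surface p q d) := by
  intro v hv
  obtain ⟨hv2, hv⟩ := (eval_X_two_mul_homogz_eq_one_iff hdeg).1 hv
  set a := (comapEquiv φ).symm (affPt 2 v)
  have hga : eval (affPt 2 v) g = a 0 ^ p - a 1 ^ q := by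
    rw [← eval_comapEquiv_of_map_eq hφ, Equiv.apply_symm_apply]
  have hζ0 : ζ ≠ 0 := by rintro rfl; simp at hζ
  change a 0 ^ p - a 1 ^ q + (ζ / v 2) ^ (d + 1) = 0 ∧ ζ / v 2 ≠ 0
  refine ⟨?_, div_ne_zero hζ0 hv2⟩
  rw [← hga, div_pow, hζ]
  field_simp
  linear_combination hv

lemma mapsTo_z0ToMilnorFiber {d p q : ℕ} {g : R2} (hdeg : g.totalDegree ≤ d)
    (hφ : φ g = X 0 ^ p - X 1 ^ q) (hζ : ζ ^ (d + 1) = -1) :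
    Set.MapsTo (z0ToMilnorFiber φ ζ) (z0Surface p q d) (milnorFiber d g) := by
  rintro w ⟨hw, hw2⟩
  have hζ0 : ζ ≠ 0 := by rintro rfl; simp at hζ
  have ht : ζ / w 2 ≠ 0 := div_ne_zero hζ0 hw2
  refine (eval_X_two_mul_homogz_eq_one_iff hdeg).2 ⟨ht, ?_⟩
  rw [z0ToMilnorFiber, affPt_two_snoc_smul _ ht, eval_comapEquiv_of_map_eq hφ]
  have hw' : w 0 ^ p - w 1 ^ q = -w 2 ^ (d + 1) := by linear_combination hw
  change (ζ / w 2) ^ (d + 1) * (w 0 ^ p - w 1 ^ q) = 1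
  rw [hw', div_pow, hζ]
  field_simp

lemma isRegularOn_milnorFiberToZ0 {A : Set (Fin 3 → ℂ)} (hA : ∀ v ∈ A, v 2 ≠ 0) (i : Fin 3) :
    IsRegularOn A fun v => milnorFiberToZ0 φ ζ v i := by
  induction i using Fin.lastCases with
  | last =>
    simp only [milnorFiberToZ0, Fin.snoc_last]
    simpa using isRegularOn_div_two_mul_eval_init ζ 1 hA
  | cast j =>
    simpa [milnorFiberToZ0] using isRegularOn_eval_affPt_two (φ.symm (X j)) hA

lemma isRegularOn_z0ToMilnorFiber {A : Set (Fin 3 → ℂ)} (hA : ∀ v ∈ A, v 2 ≠ 0) (i : Fin 3) :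
    IsRegularOn A fun w => z0ToMilnorFiber φ ζ w i := by
  induction i using Fin.lastCases with
  | last =>
    simp only [z0ToMilnorFiber, Fin.snoc_last]
    simpa using isRegularOn_div_two_mul_eval_init ζ 1 hA
  | cast j =>
    simpa [z0ToMilnorFiber] using isRegularOn_div_two_mul_eval_init ζ (φ (X j)) hA

lemma z0ToMilnorFiber_milnorFiberToZ0 (hζ : ζ ≠ 0) {v : Fin 3 → ℂ} (hv : v 2 ≠ 0) :
    z0ToMilnorFiber φ ζ (milnorFiberToZ0 φ ζ v) = v := by
  have hlast : milnorFiberToZ0 φ ζ v 2 = ζ / v 2 := rfl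
  rw [z0ToMilnorFiber, hlast, div_div_cancel₀ hζ, milnorFiberToZ0, Fin.init_snoc,
    Equiv.apply_symm_apply, snoc_smul_affPt_two hv]

lemma milnorFiberToZ0_z0ToMilnorFiber (hζ : ζ ≠ 0) {w : Fin 3 → ℂ} (hw : w 2 ≠ 0) :
    milnorFiberToZ0 φ ζ (z0ToMilnorFiber φ ζ w) = w := by
  have hlast : z0ToMilnorFiber φ ζ w 2 = ζ / w 2 := rfl
  rw [milnorFiberToZ0, hlast, div_div_cancel₀ hζ, z0ToMilnorFiber,
    affPt_two_snoc_smul _ (div_ne_zero hζ hw), Equiv.symm_apply_apply]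
  exact Fin.snoc_init_self w

end MilnorFiber

theorem milnor_fiber_iso_general (d p q : ℕ) (g : R2)
    (hdeg : g.totalDegree = d)
    (φ : R2 ≃ₐ[ℂ] R2) (hφ : φ g = X 0 ^ p - X 1 ^ q) :
    IsIsoVar {v : Fin 3 → ℂ | eval v (X 2 * homogz d g) = 1}
      {w : Fin 3 → ℂ | w 0 ^ p - w 1 ^ q + w 2 ^ (d + 1) = 0 ∧ w 2 ≠ 0} := by
  obtain ⟨ζ, hζ⟩ := IsAlgClosed.exists_pow_nat_eq (-1 : ℂ) d.succ_pos
  have hζ0 : ζ ≠ 0 := by rintro rfl; simp at hζ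
  have hF : ∀ v ∈ milnorFiber d g, v 2 ≠ 0 :=
    fun v hv => ((eval_X_two_mul_homogz_eq_one_iff hdeg.le).1 hv).1
  have hZ : ∀ w ∈ z0Surface p q d, w 2 ≠ 0 := fun w hw => hw.2
  exact ⟨milnorFiberToZ0 φ ζ, z0ToMilnorFiber φ ζ,
    mapsTo_milnorFiberToZ0 hdeg.le hφ hζ, mapsTo_z0ToMilnorFiber hdeg.le hφ hζ,
    isRegularOn_milnorFiberToZ0 hF, isRegularOn_z0ToMilnorFiber hZ,
    fun v hv => z0ToMilnorFiber_milnorFiberToZ0 hζ0 (hF v hv),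
    fun w hw => milnorFiberToZ0_z0ToMilnorFiber hζ0 (hZ w hw)⟩

/-- **Step 1 in the proof of Theorem 1.5.** The Milnor fiber `F' : f' = 1` of
`f' = z·f` is isomorphic, as a complex algebraic variety, to
`Z₀ = {u^p − v^q + w^(d+1) = 0, w ≠ 0}`. -/
theorem milnor_fiber_iso (d p q : ℕ) (g : R2)
    (hgred : Squarefree g) (hdeg : g.totalDegree = d)
    (φ : R2 ≃ₐ[ℂ] R2) (hφ : φ g = X 0 ^ p - X 1 ^ q)
    (hp : 1 ≤ p) (hq : 1 ≤ q) (hpq : Nat.Coprime p q) :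
    IsIsoVar {v : Fin 3 → ℂ | eval v (X 2 * homogz d g) = 1}
      {w : Fin 3 → ℂ | w 0 ^ p - w 1 ^ q + w 2 ^ (d + 1) = 0 ∧ w 2 ≠ 0} :=
  milnor_fiber_iso_general d p q g hdeg φ hφ
end
end
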